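/- Let (Γ,μ) be a weighted graph satisfying (p0), (VD) and (TC), and suppose the resolvent kernel bound holds: for some sufficiently large m>1 there is C>0 with g_{λ,m}(x,x) ≤ C·λ^{−m}/V(x,e(x,λ^{−1})) for all 0<λ<1 and x∈Γ. Then the local diagonal upper estimate (DUE) holds: p_n(x,x) ≤ C'/V(x,e(x,n)) for all x∈Γ, n>0. -/

import Mathlib

open Classical

noncomputable section

/-- A weighted graph: symmetric nonnegative edge weights, zero on the diagonal,
positive exactly on edges, with finitely many neighbours at each vertex. -/
structure WeightedGraph (V : Type*) where
  w : V → V → ℝ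
  w_symm : ∀ x y, w x y = w y x
  w_nonneg : ∀ x y, 0 ≤ w x y
  w_irrefl : ∀ x, w x x = 0
  locFin : ∀ x, {y | 0 < w x y}.Finite

/-- A space-time scale function is proper. -/
def properF (F : ℕ → ℝ) : Prop :=
  StrictMono F ∧
  (∃ D : ℝ, 0 < D ∧ ∀ R : ℕ, F (2 * R) ≤ D * F R) ∧
  (∀ R S : ℕ, F R + F S ≤ F (R + S)) ∧
  (∃ (A : ℕ) (B : ℝ), 1 < A ∧ 1 < B ∧ ∀ R : ℕ, B * F R ≤ F (A * R)) ∧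
  (∃ c : ℝ, 0 < c ∧ ∀ R : ℕ, c * (R : ℝ) ^ 2 ≤ F R)

/-- A proper scale function satisfying the strong anti-doubling property `B_F > A_F`. -/
def veryProperF (F : ℕ → ℝ) : Prop :=
  properF F ∧
  (∃ (A : ℕ) (B : ℝ), 1 < A ∧ (A : ℝ) < B ∧ ∀ R : ℕ, B * F R ≤ F (A * R))

/-- The (generalized) inverse of a scale function. -/
def finvF (F : ℕ → ℝ) (t : ℝ) : ℕ := sInf {R : ℕ | t ≤ F R}

/-- The sub-Gaussian kernel `k(n,R)`: the maximal integer `k ≥ 1` with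
`n/k ≤ F(⌊R/k⌋)`, and `0` if there is none. -/
def kkerF (F : ℕ → ℝ) (n R : ℕ) : ℕ :=
  sSup {k : ℕ | 1 ≤ k ∧ (n : ℝ) / (k : ℝ) ≤ F (R / k)}

namespace WeightedGraph

variable {V : Type*}

/-- The underlying simple graph. -/
def toSimpleGraph (G : WeightedGraph V) : SimpleGraph V where
  Adj x y := 0 < G.w x y
  symm := by
    constructor
    intro x y h
    rw [G.w_symm y x]
    exact h
  loopless := by
    constructor
    intro x h
    rw [G.w_irrefl x] at h
    exact lt_irrefl 0 h

/-- The graph (shortest path) distance. -/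
def gdist (G : WeightedGraph V) (x y : V) : ℕ := G.toSimpleGraph.dist x y

/-- The open metric ball `B(x,r) = {y : d(x,y) < r}`. -/
def ball (G : WeightedGraph V) (x : V) (r : ℝ) : Set V := {y | (G.gdist x y : ℝ) < r}

/-- The sphere `S(x,R) = {y : d(x,y) = R}`. -/
def sphere (G : WeightedGraph V) (x : V) (R : ℕ) : Set V := {y | G.gdist x y = R}

/-- The external boundary of a set. -/
def extBoundary (G : WeightedGraph V) (A : Set V) : Set V :=
  {y | y ∉ A ∧ ∃ x ∈ A, 0 < G.w x y}

/-- The vertex measure `μ(x) = Σ_{y ∼ x} μ_{xy}`. -/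
def mu (G : WeightedGraph V) (x : V) : ℝ := ∑' y, G.w x y

/-- The volume `V(x,r) = μ(B(x,r))`. -/
def vol (G : WeightedGraph V) (x : V) (r : ℝ) : ℝ := ∑' y : G.ball x r, G.mu y.1

/-- The volume of the annulus `v(x,s,r) = V(x,r) - V(x,s)`. -/
def annv (G : WeightedGraph V) (x : V) (s r : ℝ) : ℝ := G.vol x r - G.vol x s

/-- One-step transition probability `P(x,y) = μ_{xy}/μ(x)`. -/
def Pstep (G : WeightedGraph V) (x y : V) : ℝ := G.w x y / G.mu x

/-- `n`-step transition probability. -/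
def Pn (G : WeightedGraph V) : ℕ → V → V → ℝ
  | 0, x, y => if x = y then 1 else 0
  | n + 1, x, y => ∑' z, G.Pstep x z * Pn G n z y

/-- The heat kernel `p_n(x,y) = P_n(x,y)/μ(y)`. -/
def hk (G : WeightedGraph V) (n : ℕ) (x y : V) : ℝ := G.Pn n x y / G.mu y

/-- One step of the walk killed on exiting `A`. -/
def PstepA (G : WeightedGraph V) (A : Set V) (x y : V) : ℝ :=
  if x ∈ A ∧ y ∈ A then G.Pstep x y else 0

/-- `n`-step transition probability of the killed walk. -/
def PnA (G : WeightedGraph V) (A : Set V) : ℕ → V → V → ℝ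
  | 0, x, y => if x = y ∧ x ∈ A then 1 else 0
  | n + 1, x, y => ∑' z, G.PstepA A x z * PnA G A n z y

/-- The local Green kernel `g^A(y,z) = (Σ_k P_k^A(y,z))/μ(z)`. -/
def green (G : WeightedGraph V) (A : Set V) (y z : V) : ℝ :=
  (∑' k, G.PnA A k y z) / G.mu z

/-- The mean exit time `E_z(A) = Σ_{k≥0} P_z(T_A > k) = Σ_k Σ_{y} P_k^A(z,y)`. -/
def meanExit (G : WeightedGraph V) (A : Set V) (z : V) : ℝ :=
  ∑' (k : ℕ), ∑' (y : V), G.PnA A k z y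

/-- `E(x,r)`: the mean exit time from the ball `B(x,r)` started at `x`. -/
def mexit (G : WeightedGraph V) (x : V) (r : ℝ) : ℝ := G.meanExit (G.ball x r) x

/-- `e(x,t) = min{R ∈ ℕ : E(x,R) ≥ t}`, the inverse of the mean exit time. -/
def einv (G : WeightedGraph V) (x : V) (t : ℝ) : ℕ := sInf {R : ℕ | t ≤ G.mexit x R}

/-- `P(T_A < n)` for the walk started at `z`. -/
def exitProbLT (G : WeightedGraph V) (A : Set V) (z : V) (n : ℕ) : ℝ :=
  1 - ∑' y, G.PnA A (n - 1) z y

/-- The local sub-Gaussian kernel `k̲(x,n,R)`. -/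
def lker (G : WeightedGraph V) (x : V) (n R : ℕ) : ℕ :=
  sSup {k : ℕ | 1 ≤ k ∧ (n : ℝ) / (k : ℝ) ≤ ⨅ y : G.ball x R, G.mexit y.1 ((R / k : ℕ) : ℝ)}

/-- `u` is harmonic on `A`. -/
def Harmonic (G : WeightedGraph V) (A : Set V) (u : V → ℝ) : Prop :=
  ∀ x ∈ A, (∑' y, G.Pstep x y * u y) = u x

/-- The Dirichlet form (energy). -/
def dirichletEnergy (G : WeightedGraph V) (f : V → ℝ) : ℝ :=
  (1 / 2) * ∑' p : V × V, G.w p.1 p.2 * (f p.1 - f p.2) ^ 2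

/-- The resistance between two disjoint sets. -/
def resistance (G : WeightedGraph V) (A B : Set V) : ℝ :=
  (sInf (G.dirichletEnergy '' {f | (∀ x ∈ A, f x = 1) ∧ ∀ x ∈ B, f x = 0}))⁻¹

/-- The resistance of the annulus `ρ(x,s,r) = ρ(B(x,s), Γ∖B(x,r))`. -/
def rho (G : WeightedGraph V) (x : V) (s r : ℝ) : ℝ :=
  G.resistance (G.ball x s) (G.ball x r)ᶜ

/-- The kernel of the `(λ,m)`-resolvent `((λ+1)I - P)^{-m}`. -/
def resolventKer (G : WeightedGraph V) (lam : ℝ) (m : ℕ) (x y : V) : ℝ :=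
  (∑' k : ℕ, (Nat.choose (k + m - 1) k : ℝ) * (1 + lam) ^ (-((m : ℤ) + (k : ℤ))) * G.Pn k x y) /
    G.mu y

/-- `F(R) = inf_x E(x,R)`. -/
def Fm (G : WeightedGraph V) (R : ℕ) : ℝ := ⨅ x : V, G.mexit x R

/-- Condition `(p0)`: controlled weights. -/
def P0 (G : WeightedGraph V) (p0 : ℝ) : Prop :=
  ∀ x y : V, 0 < G.w x y → p0 ≤ G.w x y / G.mu x

/-- Condition `(VD)`: volume doubling. -/
def VD (G : WeightedGraph V) : Prop :=
  ∃ D : ℝ, 0 < D ∧ ∀ (x : V) (R : ℝ), 0 < R → G.vol x (2 * R) ≤ D * G.vol x R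

/-- Condition `(TC)`: the time comparison principle. -/
def TC (G : WeightedGraph V) : Prop :=
  ∃ C : ℝ, 1 < C ∧ ∀ (x : V) (R : ℝ), 0 < R → ∀ y ∈ G.ball x R,
    G.mexit x (2 * R) ≤ C * G.mexit y R

/-- Condition `(TD)`: time doubling. -/
def TD (G : WeightedGraph V) : Prop :=
  ∃ D : ℝ, 0 < D ∧ ∀ (x : V) (R : ℝ), 0 ≤ R → G.mexit x (2 * R) ≤ D * G.mexit x R

/-- Condition `(E)`: the mean exit time is uniform in the space. -/
def UniformE (G : WeightedGraph V) : Prop :=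
  ∃ C : ℝ, 1 < C ∧ ∀ (x y : V) (R : ℝ), 0 < R → G.mexit x R ≤ C * G.mexit y R

/-- The mean value inequality `(MV)`. -/
def MV (G : WeightedGraph V) : Prop :=
  ∃ C : ℝ, 0 < C ∧ ∀ (x : V) (R : ℝ) (u : V → ℝ), 0 < R → (∀ y, 0 ≤ u y) →
    G.Harmonic (G.ball x R) u →
    u x ≤ C / G.vol x R * ∑' y : G.ball x R, u y.1 * G.mu y.1

/-- The local diagonal upper estimate `(DUE)`. -/
def DUE (G : WeightedGraph V) : Prop :=
  ∃ C : ℝ, 0 < C ∧ ∀ (x : V) (n : ℕ), 0 < n →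
    G.hk n x x ≤ C / G.vol x (G.einv x n)

/-- The off-diagonal upper estimate `(UE)`. -/
def UE (G : WeightedGraph V) : Prop :=
  ∃ C β c : ℝ, 0 < C ∧ 1 < β ∧ 0 < c ∧ ∀ (x y : V) (n : ℕ), 0 < n →
    G.hk n x y ≤ C / G.vol x (G.einv x n) *
      Real.exp (-(c * (G.mexit x (G.gdist x y) / n) ^ ((1 : ℝ) / (β - 1))))

/-- A nonnegative Dirichlet solution of the heat equation `P^A u_n = u_{n+1}` up to time `N`. -/
def DirSol (G : WeightedGraph V) (A : Set V) (N : ℕ) (u : ℕ → V → ℝ) : Prop :=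
  (∀ n y, 0 ≤ u n y) ∧ ∀ n, n < N → ∀ z ∈ A, (∑' y, G.PstepA A z y * u n y) = u (n + 1) z

/-- The parabolic mean value inequality `(PMV)`. -/
def PMV (G : WeightedGraph V) : Prop :=
  ∃ c1 c2 C : ℝ, 0 ≤ c1 ∧ c1 < c2 ∧ 1 < C ∧
    ∀ (x : V) (R : ℝ) (u : ℕ → V → ℝ), 0 < R →
      G.DirSol (G.ball x R) ⌊c2 * G.mexit x R⌋₊ u →
      u ⌊c2 * G.mexit x R⌋₊ x ≤ C / (G.vol x R * G.mexit x R) *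
        ∑ i ∈ Finset.Icc ⌊c1 * G.mexit x R⌋₊ ⌊c2 * G.mexit x R⌋₊,
          ∑' y : G.ball x R, u i y.1 * G.mu y.1

/-- The skewed parabolic mean value inequality. -/
def SPMV (G : WeightedGraph V) : Prop :=
  ∃ c1 c2 C : ℝ, 0 < c1 ∧ c1 < c2 ∧ 1 ≤ C ∧
    ∀ (x : V) (R : ℝ) (y : V) (u : ℕ → V → ℝ), 0 < R → y ∈ G.ball x R →
      G.DirSol (G.ball x R) ⌊c2 * G.mexit x R⌋₊ u →
      u ⌊c2 * G.mexit x R⌋₊ x ≤ C / (G.vol y (2 * R) * G.mexit y (2 * R)) *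
        ∑ i ∈ Finset.Icc ⌊c1 * G.mexit x R⌋₊ ⌊c2 * G.mexit x R⌋₊,
          ∑' z : G.ball x R, u i z.1 * G.mu z.1

/-- The mean value property for Green kernels `(MVG)`. -/
def MVG (G : WeightedGraph V) : Prop :=
  ∃ C : ℝ, 1 < C ∧ ∀ (x : V) (R : ℝ) (y : V), 0 < R → 0 < G.gdist x y →
    G.green (G.ball x R) y x ≤ C / G.vol x (G.gdist x y) *
      ∑' z : G.ball x (G.gdist x y : ℝ), G.green (G.ball x R) y z.1 * G.mu z.1

/-- The Green kernel bound `(g01)`: `g^B(y,x) ≤ C·E(x,R)/V(x,d(x,y))`. -/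
def G01 (G : WeightedGraph V) : Prop :=
  ∃ C : ℝ, 1 < C ∧ ∀ (x : V) (R : ℝ) (y : V), 0 < R → 0 < G.gdist x y →
    G.green (G.ball x R) y x ≤ C * G.mexit x R / G.vol x (G.gdist x y)

/-- The elliptic Harnack inequality `(H)`. -/
def EH (G : WeightedGraph V) : Prop :=
  ∃ C : ℝ, 0 < C ∧ ∀ (x : V) (R : ℝ) (u : V → ℝ), 0 < R → (∀ y, 0 ≤ u y) →
    G.Harmonic (G.ball x (2 * R)) u → ∀ y ∈ G.ball x R, ∀ z ∈ G.ball x R, u y ≤ C * u z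

/-- The sub-Gaussian upper estimate `(UE_F)` with respect to `F`. -/
def UEF (G : WeightedGraph V) (F : ℕ → ℝ) : Prop :=
  ∃ C c : ℝ, 0 < C ∧ 0 < c ∧ ∀ (x y : V) (n : ℕ), 0 < n →
    G.hk n x y ≤ C / G.vol x (finvF F n) *
      Real.exp (-(c * (kkerF F n (G.gdist x y) : ℝ)))

/-- The sub-Gaussian lower estimate `(LE_F)` with respect to `F`. -/
def LEF (G : WeightedGraph V) (F : ℕ → ℝ) : Prop :=
  ∃ c C : ℝ, 0 < c ∧ 0 < C ∧ ∀ (x y : V) (n : ℕ), 0 < n →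
    c / G.vol x (finvF F n) * Real.exp (-(C * (kkerF F n (G.gdist x y) : ℝ))) ≤
      G.hk n x y + G.hk (n + 1) x y

/-- The `F`-parabolic Harnack inequality. -/
def PHF (G : WeightedGraph V) (F : ℕ → ℝ) : Prop :=
  ∀ c1 c2 c3 c4 η : ℝ, 0 < c1 → c1 < c2 → c2 < c3 → c3 < c4 → 0 < η → η < 1 →
    ∃ CH : ℝ, 0 < CH ∧ ∀ (x : V) (R k : ℕ) (u : ℕ → V → ℝ), 0 < R →
      (∀ n y, 0 ≤ u n y) →
      (∀ n : ℕ, k ≤ n → (n : ℝ) < (k : ℝ) + F ⌊c4 * (R : ℝ)⌋₊ → ∀ z ∈ G.ball x R,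
        (∑' y, G.Pstep z y * u n y) = u (n + 1) z) →
      ∀ (nm np : ℕ), ∀ xm ∈ G.ball x (η * R), ∀ xp ∈ G.ball x (η * R),
        (k : ℝ) + F ⌊c1 * (R : ℝ)⌋₊ ≤ (nm : ℝ) → (nm : ℝ) ≤ (k : ℝ) + F ⌊c2 * (R : ℝ)⌋₊ →
        (k : ℝ) + F ⌊c3 * (R : ℝ)⌋₊ ≤ (np : ℝ) → (np : ℝ) ≤ (k : ℝ) + F ⌊c4 * (R : ℝ)⌋₊ →
        (G.gdist xm xp : ℝ) ≤ (np : ℝ) - (nm : ℝ) →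
        u nm xm ≤ CH * (u np xp + u (np + 1) xp)

end WeightedGraph

open WeightedGraph

/-!
The even-time diagonal `p_{2j}(x,x) = ∑_z P_j(x,z)² / μ(z)` is nonincreasing in `j`, because
the walk contracts `ℓ²(1/μ)` (Cauchy–Schwarz), and `p_{2j+1}(x,x) ≤ p_{2j}(x,x)` by AM–GM; so
`p_n(x,x) ≤ p_{2k}(x,x)` for every `2k ≤ n`. Expanding `g_{λ,m}(x,x) = ∑_k c_k p_k(x,x)` with
`λ = 1/n`, the even terms with `2k ≤ n` give `g_{λ,m}(x,x) ≥ (∑_{2k ≤ n} c_{2k}) p_n(x,x)`, and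
since `(1 + 1/n)^n ≤ e` the hockey-stick identity bounds that coefficient sum below by
`n^m / (4^m m! e)`. Hence `p_n(x,x) ≲ n^{-m} g_{1/n,m}(x,x) ≲ 1 / V(x, e(x,n))`.
-/

open Function Real
open scoped Nat

lemma tsum_mul_tsum_comm {α β : Type*} {g : α → ℝ} {h : α → β → ℝ} (hg : g.HasFiniteSupport)
    (hh : ∀ a, Summable (h a)) :
    ∑' a, g a * ∑' b, h a b = ∑' b, ∑' a, g a * h a b := by
  have hs : ∀ a ∉ hg.toFinset, g a = 0 := fun a ha => by
    simpa using mt hg.mem_toFinset.mpr ha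
  calc ∑' a, g a * ∑' b, h a b
      = ∑ a ∈ hg.toFinset, ∑' b, g a * h a b := by
        rw [tsum_eq_sum fun a ha => by rw [hs a ha, zero_mul]]
        simp only [tsum_mul_left]
    _ = ∑' b, ∑ a ∈ hg.toFinset, g a * h a b :=
        (Summable.tsum_finsetSum fun a _ => (hh a).mul_left (g a)).symm
    _ = ∑' b, ∑' a, g a * h a b :=
        tsum_congr fun b => (tsum_eq_sum fun a ha => by rw [hs a ha, zero_mul]).symm

lemma Function.HasFiniteSupport.summable_of_eq_zero {α : Type*} {f g : α → ℝ}
    (hf : f.HasFiniteSupport) (h : ∀ a, f a = 0 → g a = 0) : Summable g :=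
  summable_of_hasFiniteSupport (hf.subset fun a hg hfa => hg (h a hfa))

/-- The coefficients of `((1 + λ) I - P)^{-m} = ∑ₖ resolventCoeff λ m k • Pᵏ`. -/
def resolventCoeff (lam : ℝ) (m k : ℕ) : ℝ :=
  ((k + m - 1).choose k : ℝ) * (1 + lam) ^ (-((m : ℤ) + (k : ℤ)))

lemma resolventCoeff_nonneg {lam : ℝ} (hlam : 0 ≤ lam) (m k : ℕ) : 0 ≤ resolventCoeff lam m k := by
  unfold resolventCoeff; positivity

lemma summable_resolventCoeff {lam : ℝ} (hlam : 0 < lam) {m : ℕ} (hm : 1 ≤ m) :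
    Summable (resolventCoeff lam m) := by
  have hr : ‖(1 + lam)⁻¹‖ < 1 := by
    rw [norm_inv, Real.norm_of_nonneg (by positivity)]
    exact inv_lt_one_of_one_lt₀ (by linarith)
  refine ((summable_choose_mul_geometric_of_norm_lt_one (m - 1) hr).mul_left
    ((1 + lam) ^ (-(m : ℤ)))).congr fun k => ?_
  rw [resolventCoeff, show k + m - 1 = k + (m - 1) by omega, Nat.choose_symm_add, neg_add,
    zpow_add₀ (by positivity), zpow_neg (1 + lam) k, zpow_natCast, inv_pow]
  ring

lemma choose_div_le_resolventCoeff {lam : ℝ} (hlam0 : 0 ≤ lam) (hlam1 : lam ≤ 1) (m : ℕ) {k : ℕ}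
    (hk : lam * k ≤ 1) :
    ((k + m - 1).choose k : ℝ) / (2 ^ m * exp 1) ≤ resolventCoeff lam m k := by
  have hpow : (1 + lam) ^ (m + k) ≤ 2 ^ m * exp 1 := by
    rw [pow_add]
    gcongr
    · linarith
    · calc (1 + lam) ^ k ≤ exp lam ^ k := by gcongr; linarith [add_one_le_exp lam]
        _ = exp (lam * k) := by rw [← exp_nat_mul, mul_comm]
        _ ≤ exp 1 := exp_le_exp.mpr hk
  rw [resolventCoeff, div_eq_mul_inv, show -((m : ℤ) + k) = -((m + k : ℕ) : ℤ) by push_cast; ring,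
    zpow_neg, zpow_natCast]
  gcongr

lemma pow_div_factorial_le_sum_choose {m : ℕ} (hm : 1 ≤ m) (J : ℕ) :
    (J + 1 : ℝ) ^ m / m ! ≤ ∑ j ∈ Finset.range (J + 1), ((2 * j + m - 1).choose (2 * j) : ℝ) := by
  have hchoose : (J + m).choose m ≤ ∑ j ∈ Finset.range (J + 1), (2 * j + m - 1).choose (2 * j) :=
    calc (J + m).choose m = ∑ j ∈ Finset.range (J + 1), (j + (m - 1)).choose (m - 1) := by
          rw [Nat.sum_range_add_choose, show J + (m - 1) + 1 = J + m by omega,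
            Nat.sub_add_cancel hm]
      _ ≤ ∑ j ∈ Finset.range (J + 1), (2 * j + m - 1).choose (2 * j) := by
          gcongr with j
          rw [show 2 * j + m - 1 = 2 * j + (m - 1) by omega, Nat.choose_symm_add]
          exact Nat.choose_le_choose _ (by omega)
  calc (J + 1 : ℝ) ^ m / m ! = ((J + m + 1 - m : ℕ) : ℝ) ^ m / m ! := by
        rw [show J + m + 1 - m = J + 1 by omega]; push_cast; rfl
    _ ≤ (J + m).choose m := Nat.pow_le_choose m (J + m)
    _ ≤ _ := by exact_mod_cast hchoose

namespace WeightedGraph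

variable {V : Type*} (G : WeightedGraph V)

lemma hasFiniteSupport_w (x : V) : (G.w x).HasFiniteSupport :=
  (G.locFin x).subset fun y hy => (G.w_nonneg x y).lt_of_ne' hy

lemma summable_w (x : V) : Summable (G.w x) := summable_of_hasFiniteSupport (G.hasFiniteSupport_w x)

lemma mu_nonneg (x : V) : 0 ≤ G.mu x := tsum_nonneg (G.w_nonneg x)

lemma mu_pos [Infinite V] (hconn : G.toSimpleGraph.Connected) (x : V) : 0 < G.mu x := by
  obtain ⟨y, hyx⟩ := exists_ne x
  obtain ⟨z, hxz⟩ : ∃ z, 0 < G.w x z := by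
    obtain ⟨p⟩ := hconn.preconnected x y
    cases p with
    | nil => exact absurd rfl hyx
    | cons h _ => exact ⟨_, h⟩
  exact hxz.trans_le ((G.summable_w x).le_tsum z fun u _ => G.w_nonneg x u)

lemma vol_nonneg (x : V) (r : ℝ) : 0 ≤ G.vol x r := tsum_nonneg fun y => G.mu_nonneg y.1

lemma Pstep_nonneg (x y : V) : 0 ≤ G.Pstep x y := div_nonneg (G.w_nonneg x y) (G.mu_nonneg x)

lemma hasFiniteSupport_Pstep (x : V) : (G.Pstep x).HasFiniteSupport :=
  (G.hasFiniteSupport_w x).fun_mul_left fun _ => (G.mu x)⁻¹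

lemma tsum_Pstep {x : V} (hx : 0 < G.mu x) : ∑' y, G.Pstep x y = 1 := by
  simp only [Pstep, tsum_div_const]
  exact div_self hx.ne'

lemma Pn_nonneg (n : ℕ) (x y : V) : 0 ≤ G.Pn n x y := by
  induction n generalizing x with
  | zero => unfold Pn; split_ifs <;> norm_num
  | succ n ih => exact tsum_nonneg fun z => mul_nonneg (G.Pstep_nonneg x z) (ih z)

lemma hasFiniteSupport_Pn (n : ℕ) (x : V) : (G.Pn n x).HasFiniteSupport := by
  induction n generalizing x with
  | zero =>
    refine (Set.finite_singleton x).subset fun y hy => ?_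
    by_contra hyx
    exact hy (if_neg (Ne.symm hyx))
  | succ n ih =>
    refine ((G.hasFiniteSupport_Pstep x).biUnion fun z _ => ih z).subset fun y hy => ?_
    contrapose! hy
    simp only [Set.mem_iUnion, mem_support, not_exists] at hy
    rw [notMem_support]
    refine (tsum_congr fun z => (?_ : G.Pstep x z * G.Pn n z y = 0)).trans tsum_zero
    by_cases hz : G.Pstep x z = 0
    · rw [hz, zero_mul]
    · rw [of_not_not (hy z hz), mul_zero]

lemma summable_Pn (n : ℕ) (x : V) : Summable (G.Pn n x) :=
  summable_of_hasFiniteSupport (G.hasFiniteSupport_Pn n x)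

lemma Pn_add (a b : ℕ) (x y : V) : G.Pn (a + b) x y = ∑' z, G.Pn a x z * G.Pn b z y := by
  induction a generalizing x with
  | zero =>
    rw [zero_add, tsum_eq_single x fun z hz => by simp [Pn, Ne.symm hz]]
    simp [Pn]
  | succ a ih =>
    rw [add_right_comm]
    calc G.Pn (a + b + 1) x y = ∑' z, G.Pstep x z * ∑' u, G.Pn a z u * G.Pn b u y := by
          simp only [Pn, ih]
      _ = ∑' u, ∑' z, G.Pstep x z * (G.Pn a z u * G.Pn b u y) :=
          tsum_mul_tsum_comm (G.hasFiniteSupport_Pstep x) fun z =>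
            summable_of_hasFiniteSupport ((G.hasFiniteSupport_Pn a z).fun_mul_left _)
      _ = ∑' u, G.Pn (a + 1) x u * G.Pn b u y := by
          simp only [Pn, ← tsum_mul_right, mul_assoc]

lemma Pn_one (x y : V) : G.Pn 1 x y = G.Pstep x y := by
  rw [Pn, tsum_eq_single y fun z hz => by simp [Pn, hz]]
  simp [Pn]

lemma Pn_succ' (n : ℕ) (x y : V) : G.Pn (n + 1) x y = ∑' z, G.Pn n x z * G.Pstep z y := by
  simp only [Pn_add, Pn_one]

lemma tsum_Pn (hμ : ∀ x, 0 < G.mu x) (n : ℕ) (x : V) : ∑' y, G.Pn n x y = 1 := by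
  induction n generalizing x with
  | zero => rw [tsum_eq_single x fun y hy => by simp [Pn, Ne.symm hy]]; simp [Pn]
  | succ n ih =>
    calc ∑' y, G.Pn (n + 1) x y = ∑' z, G.Pstep x z * ∑' y, G.Pn n z y :=
          (tsum_mul_tsum_comm (G.hasFiniteSupport_Pstep x) (G.summable_Pn n)).symm
      _ = 1 := by simp only [ih, mul_one, G.tsum_Pstep (hμ x)]

lemma Pn_le_one (hμ : ∀ x, 0 < G.mu x) (n : ℕ) (x y : V) : G.Pn n x y ≤ 1 := by
  rw [← G.tsum_Pn hμ n x]
  exact (G.summable_Pn n x).le_tsum y fun z _ => G.Pn_nonneg n x z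

lemma mu_mul_Pn_comm (hμ : ∀ x, 0 < G.mu x) (n : ℕ) (x y : V) :
    G.mu x * G.Pn n x y = G.mu y * G.Pn n y x := by
  induction n generalizing x y with
  | zero =>
    by_cases h : x = y
    · rw [h]
    · simp [Pn, h, Ne.symm h]
  | succ n ih =>
    rw [Pn_succ', Pn, ← tsum_mul_left, ← tsum_mul_left]
    refine tsum_congr fun z => ?_
    have hz := (hμ z).ne'
    calc G.mu x * (G.Pn n x z * G.Pstep z y) = G.mu z * G.Pn n z x * (G.w z y / G.mu z) := by
          rw [← ih, Pstep]; ring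
      _ = G.mu y * (G.Pstep y z * G.Pn n z x) := by
          rw [Pstep, G.w_symm z y]; field_simp [(hμ y).ne']

lemma hk_add_diag (hμ : ∀ x, 0 < G.mu x) (a b : ℕ) (x : V) :
    G.hk (a + b) x x = ∑' z, G.Pn a x z * G.Pn b x z / G.mu z := by
  rw [hk, Pn_add, ← tsum_div_const]
  refine tsum_congr fun z => ?_
  have hrev := G.mu_mul_Pn_comm hμ b x z
  field_simp [(hμ x).ne', (hμ z).ne']
  linear_combination -(G.Pn a x z) * hrev

lemma tsum_sq_div_mu_tsum_mul_Pstep_le (hμ : ∀ x, 0 < G.mu x) {f : V → ℝ}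
    (hf : f.HasFiniteSupport) :
    ∑' y, (∑' z, f z * G.Pstep z y) ^ 2 / G.mu y ≤ ∑' z, f z ^ 2 / G.mu z := by
  set s := hf.toFinset
  have hs : ∀ z ∉ s, f z = 0 := fun z hz => by simpa using mt hf.mem_toFinset.mpr hz
  set M : V → ℝ := fun y => ∑ z ∈ s, f z ^ 2 / G.mu z ^ 2 * G.w z y
  have hM : Summable M := summable_sum fun z _ => (G.summable_w z).mul_left _
  -- Cauchy–Schwarz against the weights `w z y`, whose sum over `z` is at most `μ y`
  have key : ∀ y, (∑' z, f z * G.Pstep z y) ^ 2 / G.mu y ≤ M y := by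
    intro y
    rw [tsum_eq_sum fun z hz => by rw [hs z hz, zero_mul], div_le_iff₀ (hμ y)]
    have hw : ∑ z ∈ s, G.w z y ≤ G.mu y := by
      simp only [G.w_symm _ y]
      exact (G.summable_w y).sum_le_tsum s fun z _ => G.w_nonneg y z
    calc (∑ z ∈ s, f z * G.Pstep z y) ^ 2 ≤ M y * ∑ z ∈ s, G.w z y :=
          Finset.sum_sq_le_sum_mul_sum_of_sq_le_mul s
            (fun z _ => mul_nonneg (by positivity) (G.w_nonneg z y))
            (fun z _ => G.w_nonneg z y)
            (fun z _ => le_of_eq (by rw [Pstep]; field_simp [(hμ z).ne']))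
      _ ≤ M y * G.mu y :=
          mul_le_mul_of_nonneg_left hw (Finset.sum_nonneg fun z _ =>
            mul_nonneg (by positivity) (G.w_nonneg z y))
  calc ∑' y, (∑' z, f z * G.Pstep z y) ^ 2 / G.mu y ≤ ∑' y, M y :=
        Summable.tsum_le_tsum key
          (hM.of_nonneg_of_le (fun y => div_nonneg (sq_nonneg _) (G.mu_nonneg y)) key) hM
    _ = ∑ z ∈ s, f z ^ 2 / G.mu z ^ 2 * G.mu z := by
        rw [Summable.tsum_finsetSum fun z _ => (G.summable_w z).mul_left _]
        simp only [tsum_mul_left, mu]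
    _ = ∑' z, f z ^ 2 / G.mu z := by
        rw [tsum_eq_sum fun z hz => by rw [hs z hz]; ring]
        refine Finset.sum_congr rfl fun z _ => ?_
        field_simp [(hμ z).ne']

lemma hk_two_mul_antitone (hμ : ∀ x, 0 < G.mu x) (x : V) : Antitone fun j => G.hk (2 * j) x x := by
  refine antitone_nat_of_succ_le fun j => ?_
  simp only [two_mul, G.hk_add_diag hμ, ← sq, Pn_succ']
  exact G.tsum_sq_div_mu_tsum_mul_Pstep_le hμ (G.hasFiniteSupport_Pn j x)

lemma hk_two_mul_add_one_le (hμ : ∀ x, 0 < G.mu x) (j : ℕ) (x : V) :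
    G.hk (2 * j + 1) x x ≤ G.hk (2 * j) x x := by
  have hj := G.hk_two_mul_antitone hμ x (by omega : j ≤ j + 1)
  simp only [two_mul, G.hk_add_diag hμ, ← sq] at hj
  rw [show 2 * j + 1 = j + (j + 1) by ring, two_mul, G.hk_add_diag hμ, G.hk_add_diag hμ]
  simp only [← sq]
  have hsq : ∀ k, Summable fun z => G.Pn k x z ^ 2 / G.mu z := fun k =>
    (G.hasFiniteSupport_Pn k x).summable_of_eq_zero fun z hz => by simp [hz]
  have hprod : Summable fun z => G.Pn j x z * G.Pn (j + 1) x z / G.mu z :=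
    (G.hasFiniteSupport_Pn j x).summable_of_eq_zero fun z hz => by simp [hz]
  calc ∑' z, G.Pn j x z * G.Pn (j + 1) x z / G.mu z
      ≤ ∑' z, (G.Pn j x z ^ 2 / G.mu z + G.Pn (j + 1) x z ^ 2 / G.mu z) / 2 := by
        refine Summable.tsum_le_tsum (fun z => ?_) hprod (((hsq j).add (hsq (j + 1))).div_const 2)
        have := div_le_div_of_nonneg_right (two_mul_le_add_sq (G.Pn j x z) (G.Pn (j + 1) x z))
          (G.mu_nonneg z)
        rw [add_div, mul_assoc, mul_div_assoc] at this
        linarith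
    _ ≤ ∑' z, G.Pn j x z ^ 2 / G.mu z := by
        rw [tsum_div_const, (hsq j).tsum_add (hsq (j + 1))]
        linarith

lemma hk_nonneg (n : ℕ) (x y : V) : 0 ≤ G.hk n x y := div_nonneg (G.Pn_nonneg n x y) (G.mu_nonneg y)

lemma hk_one_diag (x : V) : G.hk 1 x x = 0 := by
  rw [hk, Pn_one, Pstep, G.w_irrefl, zero_div, zero_div]

lemma hk_diag_le_hk_two_mul_div_two (hμ : ∀ x, 0 < G.mu x) (n : ℕ) (x : V) :
    G.hk n x x ≤ G.hk (2 * (n / 2)) x x := by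
  obtain ⟨j, rfl | rfl⟩ := Nat.even_or_odd' n
  · rw [Nat.mul_div_cancel_left j two_pos]
  · rw [show (2 * j + 1) / 2 = j by omega]
    exact G.hk_two_mul_add_one_le hμ j x

lemma resolventKer_diag_eq (lam : ℝ) (m : ℕ) (x : V) :
    G.resolventKer lam m x x = ∑' k, resolventCoeff lam m k * G.hk k x x := by
  rw [resolventKer, ← tsum_div_const]
  simp only [resolventCoeff, hk, mul_div_assoc]

lemma sum_resolventCoeff_mul_hk_le_resolventKer (hμ : ∀ x, 0 < G.mu x) {lam : ℝ} (hlam : 0 < lam)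
    {m : ℕ} (hm : 1 ≤ m) (x : V) (J : ℕ) :
    (∑ j ∈ Finset.range (J + 1), resolventCoeff lam m (2 * j)) * G.hk (2 * J) x x ≤
      G.resolventKer lam m x x := by
  have hterm_nonneg : ∀ k, 0 ≤ resolventCoeff lam m k * G.hk k x x := fun k =>
    mul_nonneg (resolventCoeff_nonneg hlam.le m k) (G.hk_nonneg k x x)
  have hsummable : Summable fun k => resolventCoeff lam m k * G.hk k x x :=
    ((summable_resolventCoeff hlam hm).mul_right (G.mu x)⁻¹).of_nonneg_of_le hterm_nonneg
      fun k => mul_le_mul_of_nonneg_left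
        (div_le_div_of_nonneg_right (G.Pn_le_one hμ k x x) (G.mu_nonneg x) |>.trans_eq
          (one_div _)) (resolventCoeff_nonneg hlam.le m k)
  rw [resolventKer_diag_eq, Finset.sum_mul]
  calc ∑ j ∈ Finset.range (J + 1), resolventCoeff lam m (2 * j) * G.hk (2 * J) x x
      ≤ ∑ j ∈ Finset.range (J + 1), resolventCoeff lam m (2 * j) * G.hk (2 * j) x x := by
        gcongr with j hj
        · exact resolventCoeff_nonneg hlam.le m _
        · exact G.hk_two_mul_antitone hμ x (Nat.lt_succ_iff.mp (Finset.mem_range.mp hj))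
    _ = ∑ k ∈ (Finset.range (J + 1)).image (2 * ·), resolventCoeff lam m k * G.hk k x x := by
        rw [Finset.sum_image fun i _ j _ (h : 2 * i = 2 * j) => by omega]
    _ ≤ ∑' k, resolventCoeff lam m k * G.hk k x x :=
        hsummable.sum_le_tsum _ fun k _ => hterm_nonneg k

lemma hk_diag_mul_pow_le_resolventKer (hμ : ∀ x, 0 < G.mu x) {m : ℕ} (hm : 1 ≤ m) (x : V)
    {n : ℕ} (hn : 0 < n) :
    G.hk n x x * n ^ m ≤ 4 ^ m * m ! * exp 1 * G.resolventKer (n : ℝ)⁻¹ m x x := by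
  set J := n / 2
  have hn' : (1 : ℝ) ≤ n := by exact_mod_cast hn
  have hcoeff : (J + 1 : ℝ) ^ m / (m ! * (2 ^ m * exp 1)) ≤
      ∑ j ∈ Finset.range (J + 1), resolventCoeff (n : ℝ)⁻¹ m (2 * j) := by
    rw [← div_div]
    refine (div_le_div_of_nonneg_right (pow_div_factorial_le_sum_choose hm J)
      (by positivity)).trans ?_
    rw [Finset.sum_div]
    refine Finset.sum_le_sum fun j hj => choose_div_le_resolventCoeff (by positivity)
      (inv_le_one_of_one_le₀ hn') m ?_
    have h2j : (2 * j : ℝ) ≤ n := by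
      have := Finset.mem_range.mp hj
      exact_mod_cast (show 2 * j ≤ n by omega)
    rw [inv_mul_le_iff₀ (by linarith), mul_one]
    exact_mod_cast h2j
  have hnJ : (n : ℝ) ^ m ≤ 2 ^ m * (J + 1 : ℝ) ^ m := by
    rw [← mul_pow]
    gcongr
    exact_mod_cast (show n ≤ 2 * (J + 1) by omega)
  calc G.hk n x x * n ^ m ≤ G.hk (2 * J) x x * (2 ^ m * (J + 1 : ℝ) ^ m) :=
        mul_le_mul (G.hk_diag_le_hk_two_mul_div_two hμ n x) hnJ (by positivity)
          (G.hk_nonneg _ x x)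
    _ = 4 ^ m * m ! * exp 1 * ((J + 1 : ℝ) ^ m / (m ! * (2 ^ m * exp 1)) * G.hk (2 * J) x x) := by
        rw [show (4 : ℝ) ^ m = 2 ^ m * 2 ^ m by rw [← mul_pow]; norm_num]
        field_simp
    _ ≤ 4 ^ m * m ! * exp 1 * G.resolventKer (n : ℝ)⁻¹ m x x := by
        gcongr
        exact (mul_le_mul_of_nonneg_right hcoeff (G.hk_nonneg _ x x)).trans
          (G.sum_resolventCoeff_mul_hk_le_resolventKer hμ (by positivity) hm x J)

end WeightedGraph

theorem resolvent_to_due_general {V : Type*} [Infinite V]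
    (G : WeightedGraph V) (hconn : G.toSimpleGraph.Connected)
    (hres : ∃ (m : ℕ) (C : ℝ), 1 < m ∧ 0 < C ∧ ∀ (lam : ℝ), 0 < lam → lam < 1 → ∀ x : V,
      G.resolventKer lam m x x ≤ C * lam ^ (-(m : ℤ)) / G.vol x (G.einv x lam⁻¹)) :
    G.DUE := by
  obtain ⟨m, C, hm, hC, hbound⟩ := hres
  have hμ := G.mu_pos hconn
  refine ⟨4 ^ m * m ! * exp 1 * C, by positivity, fun x n hn => ?_⟩
  obtain rfl | hn1 : n = 1 ∨ 1 < n := by omega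
  · rw [G.hk_one_diag]
    exact div_nonneg (by positivity) (G.vol_nonneg x _)
  have hbound_n :=
    hbound (n : ℝ)⁻¹ (by positivity) (inv_lt_one_of_one_lt₀ (by exact_mod_cast hn1)) x
  rw [inv_inv, inv_zpow', neg_neg, zpow_natCast] at hbound_n
  refine le_of_mul_le_mul_right ?_ (pow_pos (Nat.cast_pos.mpr hn) m)
  calc G.hk n x x * n ^ m ≤ 4 ^ m * m ! * exp 1 * G.resolventKer (n : ℝ)⁻¹ m x x :=
        G.hk_diag_mul_pow_le_resolventKer hμ hm.le x hn
    _ ≤ 4 ^ m * m ! * exp 1 * (C * n ^ m / G.vol x (G.einv x n)) := by gcongr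
    _ = 4 ^ m * m ! * exp 1 * C / G.vol x (G.einv x n) * n ^ m := by ring

/-- **Theorem 3.15.** Under `(p0)`, `(VD)`, `(TC)` and the resolvent kernel bound
`g_{λ,m}(x,x) ≤ C·λ^{-m}/V(x,e(x,λ⁻¹))` (for some sufficiently large `m > 1`),
the local diagonal upper estimate `(DUE)` holds. -/
theorem resolvent_to_due {V : Type*} [Countable V] [Infinite V]
    (G : WeightedGraph V) (hconn : G.toSimpleGraph.Connected)
    (p0 : ℝ) (hp0 : 0 < p0) (hP0 : G.P0 p0) (hVD : G.VD) (hTC : G.TC)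
    (hres : ∃ (m : ℕ) (C : ℝ), 1 < m ∧ 0 < C ∧ ∀ (lam : ℝ), 0 < lam → lam < 1 → ∀ x : V,
      G.resolventKer lam m x x ≤ C * lam ^ (-(m : ℤ)) / G.vol x (G.einv x lam⁻¹)) :
    G.DUE :=
  resolvent_to_due_general G hconn hres
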